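/- arXiv:2111.02155 — 6 statements merged into one kernel-verified Lean document; each statement's English description precedes it below -/
import Mathlib

section
/- For every $\rho \in [-1, 1]$, the function $\widehat{R}(\rho) := \frac{\sqrt{1-\rho^2} + (\pi - \cos^{-1}(\rho))\rho}{\pi}$ satisfies $\rho \leq \widehat{R}(\rho)$, with equality if and only if $\rho = 1$. -/
/-! With `θ = arccos ρ`, the gap `π (R̂(ρ) - ρ)` equals `sin θ - θ cos θ`, which is positive on
`(0, π]`: below `π / 2` this is `θ < tan θ`, above it `θ cos θ ≤ 0 < sin θ`. The gap vanishes
only at `θ = 0`, i.e. `ρ = 1`. -/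

open Real

/-- The dual activation of the ReLU. -/
noncomputable def Rhat (ρ : ℝ) : ℝ :=
  (Real.sqrt (1 - ρ ^ 2) + (π - Real.arccos ρ) * ρ) / π

lemma Real.mul_cos_lt_sin {x : ℝ} (hx₀ : 0 < x) (hxπ : x ≤ π) : x * cos x < sin x := by
  rcases lt_or_ge x (π / 2) with hx | hx
  · have hcos : 0 < cos x := cos_pos_of_mem_Ioo ⟨by linarith [pi_pos], hx⟩
    have htan := lt_tan hx₀ hx
    rwa [tan_eq_sin_div_cos, lt_div_iff₀ hcos] at htan
  · have hcos : cos x ≤ 0 := cos_nonpos_of_pi_div_two_le_of_le hx (by linarith [pi_pos])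
    rcases hxπ.lt_or_eq with hxπ | rfl
    · nlinarith [sin_pos_of_pos_of_lt_pi hx₀ hxπ]
    · simp [pi_pos]

lemma pi_mul_Rhat_sub_self (ρ : ℝ) :
    π * (Rhat ρ - ρ) = sin (arccos ρ) - arccos ρ * ρ := by
  rw [Rhat, sin_arccos]
  field_simp [pi_ne_zero]
  ring

lemma Rhat_one : Rhat 1 = 1 := by
  simp [Rhat]

lemma self_lt_Rhat {ρ : ℝ} (h₁ : -1 ≤ ρ) (h₂ : ρ < 1) : ρ < Rhat ρ := by
  have hgap := mul_cos_lt_sin (arccos_pos.mpr h₂) (arccos_le_pi ρ)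
  rw [cos_arccos h₁ h₂.le] at hgap
  have hpos : 0 < π * (Rhat ρ - ρ) := by rw [pi_mul_Rhat_sub_self]; linarith
  exact sub_pos.mp (pos_of_mul_pos_right hpos pi_pos.le)

/-- For every `ρ ∈ [-1, 1]`, `ρ ≤ Rhat ρ`, with equality iff `ρ = 1`. -/
theorem stmt_2 (ρ : ℝ) (hρ : ρ ∈ Set.Icc (-1 : ℝ) 1) :
    ρ ≤ Rhat ρ ∧ (Rhat ρ = ρ ↔ ρ = 1) := by
  obtain ⟨h₁, h₂⟩ := hρ
  rcases h₂.lt_or_eq with h₂ | rfl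
  · have hlt := self_lt_Rhat h₁ h₂
    exact ⟨hlt.le, iff_of_false hlt.ne' h₂.ne⟩
  · exact ⟨Rhat_one.ge, iff_of_true Rhat_one rfl⟩
end

section
/- The function $\widehat{R}(\rho) := \frac{\sqrt{1-\rho^2} + (\pi - \cos^{-1}(\rho))\rho}{\pi}$ is convex on $[-1, 1]$, and satisfies $\widehat{R}(1) = 1$ and $\widehat{R}(-1) = 0$. -/
/-!
On `(-1, 1)` the derivative of `ρ ↦ √(1 - ρ²)` is `-ρ / √(1 - ρ²)`, which cancels exactly against
the term `ρ · arccos' ρ = ρ / √(1 - ρ²)` from the product rule, so `Rhat' ρ = (π - arccos ρ) / π`.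
This is monotone because `arccos` is antitone, and `Rhat` is continuous on `[-1, 1]`, hence convex.
-/

open Real

lemma continuous_Rhat : Continuous Rhat :=
  ((continuous_const.sub (continuous_pow 2)).sqrt.add
    ((continuous_const.sub continuous_arccos).mul continuous_id)).div_const π

lemma hasDerivAt_Rhat {x : ℝ} (h₁ : -1 < x) (h₂ : x < 1) :
    HasDerivAt Rhat ((π - arccos x) / π) x := by
  have hx : 0 < 1 - x ^ 2 := by nlinarith
  have hpos : 0 < √(1 - x ^ 2) := sqrt_pos.mpr hx
  have hpoly : HasDerivAt (fun ρ : ℝ => 1 - ρ ^ 2) (-(2 * x)) x := by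
    simpa using (hasDerivAt_pow 2 x).const_sub 1
  have harccos := hasDerivAt_arccos h₁.ne' h₂.ne
  refine (((hpoly.sqrt hx.ne').add ((harccos.const_sub π).mul (hasDerivAt_id' x))).div_const
    π).congr_deriv ?_
  field_simp
  ring

lemma monotoneOn_deriv_Rhat : MonotoneOn (deriv Rhat) (Set.Ioo (-1) 1) := by
  intro x hx y hy hxy
  rw [(hasDerivAt_Rhat hx.1 hx.2).deriv, (hasDerivAt_Rhat hy.1 hy.2).deriv]
  gcongr

lemma convexOn_Rhat : ConvexOn ℝ (Set.Icc (-1) 1) Rhat := by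
  refine MonotoneOn.convexOn_of_deriv (convex_Icc _ _) continuous_Rhat.continuousOn ?_ ?_ <;>
    rw [interior_Icc]
  · exact fun x hx => (hasDerivAt_Rhat hx.1 hx.2).differentiableAt.differentiableWithinAt
  · exact monotoneOn_deriv_Rhat

lemma Rhat_neg_one : Rhat (-1) = 0 := by
  simp [Rhat, arccos_neg_one]

/-- `Rhat` is convex on `[-1, 1]`, with `Rhat 1 = 1` and `Rhat (-1) = 0`. -/
theorem stmt_3 :
    ConvexOn ℝ (Set.Icc (-1 : ℝ) 1) Rhat ∧ Rhat 1 = 1 ∧ Rhat (-1) = 0 :=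
  ⟨convexOn_Rhat, Rhat_one, Rhat_neg_one⟩
end

section
/- Let $x, y \in \mathbb{R}^{n\times n\times d}$ and let $F \in \mathbb{R}^{r\times r\times d}$ ($r \leq n$) have i.i.d. zero-mean Gaussian entries with variance $\nu^2 = 1/r^2$. Then for the cyclic convolution, $\mathbb{E}[\langle F * x, F * y \rangle] = \langle x, y \rangle$. -/
/-!
Each entry of `F * x` is a linear combination `∑ₚ x_p F_p` of the filter entries, with `x_p` the
entry of `x` shifted by the filter position `p = (i, j, k)`. The `F_p` are independent, centered
and of variance `1/r²`, so by bilinearity of the covariance only diagonal terms survive: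
`𝔼[⟨F * x, F * y⟩]` is `1/r²` times the sum over the `r²d` positions `p` of the inner product of
channel `k` of `x` and `y` cyclically shifted by `(i, j)`. Cyclic shifts preserve that inner
product, so the `r²` choices of `(i, j)` cancel the factor `1/r²`.
-/

open MeasureTheory ProbabilityTheory

/-- Cyclic convolution of a filter `F : ℝ^{r×r×d}` with an input
`x : ℝ^{n×n×d}` (index arithmetic modulo `n`). -/
def cconv {n r d : ℕ} [NeZero n] (F : Fin r → Fin r → Fin d → ℝ)
    (x : ZMod n → ZMod n → Fin d → ℝ) : ZMod n → ZMod n → ℝ :=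
  fun u v => ∑ i : Fin r, ∑ j : Fin r, ∑ k : Fin d,
    F i j k * x (u - ((i : ℕ) : ZMod n)) (v - ((j : ℕ) : ZMod n)) k

open Finset
open scoped NNReal ENNReal

namespace MeasureTheory

variable {Ω ι : Type*} {mΩ : MeasurableSpace Ω} {μ : Measure Ω} {X : ι → Ω → ℝ}

lemma memLp_sum_const_mul [Fintype ι] {p : ℝ≥0∞} (hX : ∀ i, MemLp (X i) p μ) (a : ι → ℝ) :
    MemLp (fun ω => ∑ i, a i * X i ω) p μ :=
  memLp_finsetSum _ fun i _ => (hX i).const_mul (a i)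

lemma integrable_sum_mul_mul_sum_mul [Fintype ι] (hX : ∀ i, MemLp (X i) 2 μ) (a b : ι → ℝ) :
    Integrable (fun ω => (∑ i, a i * X i ω) * (∑ i, b i * X i ω)) μ :=
  (memLp_sum_const_mul hX a).integrable_mul (memLp_sum_const_mul hX b)

end MeasureTheory

namespace ProbabilityTheory

variable {Ω ι : Type*} {mΩ : MeasurableSpace Ω} {μ : Measure Ω} {X : ι → Ω → ℝ} {σ2 : ℝ}

lemma covariance_eq_ite_of_pairwise_indepFun [DecidableEq ι] (hX : ∀ i, MemLp (X i) 2 μ)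
    (hindep : Pairwise fun i j => X i ⟂ᵢ[μ] X j) (hvar : ∀ i, Var[X i; μ] = σ2) (i j : ι) :
    cov[X i, X j; μ] = if i = j then σ2 else 0 := by
  split_ifs with hij
  · subst hij
    rw [covariance_self (hX i).aemeasurable, hvar]
  · exact (hindep hij).covariance_eq_zero (hX i) (hX j)

lemma covariance_sum_mul_sum_mul_of_pairwise_indepFun [Fintype ι] [IsFiniteMeasure μ]
    (hX : ∀ i, MemLp (X i) 2 μ) (hindep : Pairwise fun i j => X i ⟂ᵢ[μ] X j)
    (hvar : ∀ i, Var[X i; μ] = σ2) (a b : ι → ℝ) :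
    cov[fun ω => ∑ i, a i * X i ω, fun ω => ∑ i, b i * X i ω; μ] = σ2 * ∑ i, a i * b i := by
  classical
  rw [covariance_fun_sum_fun_sum (fun i => (hX i).const_mul (a i))
    (fun i => (hX i).const_mul (b i))]
  simp only [covariance_const_mul_left, covariance_const_mul_right,
    covariance_eq_ite_of_pairwise_indepFun hX hindep hvar, mul_ite, mul_zero, sum_ite_eq,
    mem_univ, if_true, mul_sum]
  exact sum_congr rfl fun i _ => by ring

lemma integral_sum_mul_mul_sum_mul_of_pairwise_indepFun [Fintype ι] [IsProbabilityMeasure μ]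
    (hX : ∀ i, MemLp (X i) 2 μ) (hindep : Pairwise fun i j => X i ⟂ᵢ[μ] X j)
    (hmean : ∀ i, μ[X i] = 0) (hvar : ∀ i, Var[X i; μ] = σ2) (a b : ι → ℝ) :
    ∫ ω, (∑ i, a i * X i ω) * (∑ i, b i * X i ω) ∂μ = σ2 * ∑ i, a i * b i := by
  have hmean_sum : ∀ c : ι → ℝ, μ[fun ω => ∑ i, c i * X i ω] = 0 := fun c => by
    rw [integral_finsetSum _ fun i _ => ((hX i).integrable one_le_two).const_mul (c i)]
    simp [integral_const_mul, hmean]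
  have h := covariance_eq_sub (memLp_sum_const_mul hX a) (memLp_sum_const_mul hX b)
  rw [hmean_sum, hmean_sum, mul_zero, sub_zero,
    covariance_sum_mul_sum_mul_of_pairwise_indepFun hX hindep hvar] at h
  exact h.symm

lemma HasLaw.memLp_of_gaussianReal {Y : Ω → ℝ} {m : ℝ} {v : ℝ≥0} {p : ℝ≥0∞} (hp : p ≠ ∞)
    (hY : HasLaw Y (gaussianReal m v) μ) : MemLp Y p μ :=
  (hY.identDistrib HasLaw.id).memLp_iff.mpr (memLp_id_gaussianReal' p hp)

end ProbabilityTheory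

section CyclicConvolution

variable {n r d : ℕ} [NeZero n]

lemma cconv_eq_sum (F : Fin r → Fin r → Fin d → ℝ) (x : ZMod n → ZMod n → Fin d → ℝ)
    (u v : ZMod n) :
    cconv F x u v = ∑ p : Fin r × Fin r × Fin d,
      x (u - (p.1 : ℕ)) (v - (p.2.1 : ℕ)) p.2.2 * F p.1 p.2.1 p.2.2 := by
  simp only [cconv, Fintype.sum_prod_type, mul_comm]

lemma sum_sum_sum_shift_mul_shift (x y : ZMod n → ZMod n → Fin d → ℝ) :
    ∑ u : ZMod n, ∑ v : ZMod n, ∑ p : Fin r × Fin r × Fin d,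
      x (u - (p.1 : ℕ)) (v - (p.2.1 : ℕ)) p.2.2 * y (u - (p.1 : ℕ)) (v - (p.2.1 : ℕ)) p.2.2 =
    r ^ 2 * ∑ u, ∑ v, ∑ k, x u v k * y u v k := by
  have hshift : ∀ (a b : ZMod n) (k : Fin d),
      ∑ u, ∑ v, x (u - a) (v - b) k * y (u - a) (v - b) k = ∑ u, ∑ v, x u v k * y u v k :=
    fun a b k => Fintype.sum_equiv (Equiv.subRight a) _ _ fun u =>
      Fintype.sum_equiv (Equiv.subRight b) _ _ fun v => rfl
  calc _ = ∑ p : Fin r × Fin r × Fin d, ∑ u, ∑ v,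
        x (u - (p.1 : ℕ)) (v - (p.2.1 : ℕ)) p.2.2 * y (u - (p.1 : ℕ)) (v - (p.2.1 : ℕ)) p.2.2 :=
        (sum_congr rfl fun u _ => sum_comm).trans sum_comm
    _ = ∑ p : Fin r × Fin r × Fin d, ∑ u, ∑ v, x u v p.2.2 * y u v p.2.2 :=
        sum_congr rfl fun p _ => hshift _ _ _
    _ = r ^ 2 * ∑ k, ∑ u, ∑ v, x u v k * y u v k := by
        simp only [Fintype.sum_prod_type, sum_const, card_univ, Fintype.card_fin, nsmul_eq_mul]
        ring
    _ = r ^ 2 * ∑ u, ∑ v, ∑ k, x u v k * y u v k := by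
        rw [sum_comm]
        exact congrArg _ (sum_congr rfl fun u _ => sum_comm)

end CyclicConvolution

theorem stmt_6_general {Ω : Type*} [MeasureSpace Ω] [IsProbabilityMeasure (ℙ : Measure Ω)]
    {n r d : ℕ} [NeZero n] (hr : 0 < r)
    (x y : ZMod n → ZMod n → Fin d → ℝ)
    (F : Ω → Fin r → Fin r → Fin d → ℝ)
    (hmeas : ∀ i j k, Measurable fun ω => F ω i j k)
    (hGauss : ∀ i j k, Measure.map (fun ω => F ω i j k) ℙ =
      gaussianReal 0 ((1 : ℝ) / r ^ 2).toNNReal)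
    (hindep : iIndepFun
      (fun p : Fin r × Fin r × Fin d => fun ω => F ω p.1 p.2.1 p.2.2) ℙ) :
    ∫ ω, ∑ u : ZMod n, ∑ v : ZMod n, cconv (F ω) x u v * cconv (F ω) y u v =
      ∑ u : ZMod n, ∑ v : ZMod n, ∑ k : Fin d, x u v k * y u v k := by
  set X : Fin r × Fin r × Fin d → Ω → ℝ := fun p ω => F ω p.1 p.2.1 p.2.2
  have hlaw (p) : HasLaw (X p) (gaussianReal 0 ((1 : ℝ) / r ^ 2).toNNReal) ℙ :=
    ⟨(hmeas _ _ _).aemeasurable, hGauss _ _ _⟩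
  have hX (p) : MemLp (X p) 2 ℙ := (hlaw p).memLp_of_gaussianReal ENNReal.ofNat_ne_top
  have hmean (p) : ℙ[X p] = 0 := by rw [(hlaw p).integral_eq, integral_id_gaussianReal]
  have hvar (p) : Var[X p; ℙ] = 1 / r ^ 2 := by
    rw [(hlaw p).variance_eq, variance_id_gaussianReal, Real.coe_toNNReal _ (by positivity)]
  have hconv (ω) (z : ZMod n → ZMod n → Fin d → ℝ) (u v) : cconv (F ω) z u v =
      ∑ p, z (u - (p.1 : ℕ)) (v - (p.2.1 : ℕ)) p.2.2 * X p ω :=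
    cconv_eq_sum _ _ _ _
  have hint (u v : ZMod n) := integrable_sum_mul_mul_sum_mul hX
    (fun p => x (u - (p.1 : ℕ)) (v - (p.2.1 : ℕ)) p.2.2)
    (fun p => y (u - (p.1 : ℕ)) (v - (p.2.1 : ℕ)) p.2.2)
  simp_rw [hconv]
  rw [integral_finsetSum _ fun u _ => integrable_finsetSum _ fun v _ => hint u v]
  simp_rw [integral_finsetSum _ fun v _ => hint _ v]
  simp_rw [integral_sum_mul_mul_sum_mul_of_pairwise_indepFun hX (fun _ _ => hindep.indepFun)
    hmean hvar]
  simp_rw [← mul_sum]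
  rw [sum_sum_sum_shift_mul_shift]
  field_simp

/-- Johnson–Lindenstrauss in expectation for random linear convolutions: if the
entries of the filter `F` are i.i.d. centered Gaussians with variance `1/r²`,
then `𝔼[⟨F * x, F * y⟩] = ⟨x, y⟩`. -/
theorem stmt_6 {Ω : Type*} [MeasureSpace Ω] [IsProbabilityMeasure (ℙ : Measure Ω)]
    {n r d : ℕ} [NeZero n] (hr : 0 < r) (hrn : r ≤ n)
    (x y : ZMod n → ZMod n → Fin d → ℝ)
    (F : Ω → Fin r → Fin r → Fin d → ℝ)
    (hmeas : ∀ i j k, Measurable fun ω => F ω i j k)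
    (hGauss : ∀ i j k, Measure.map (fun ω => F ω i j k) ℙ =
      gaussianReal 0 ((1 : ℝ) / r ^ 2).toNNReal)
    (hindep : iIndepFun
      (fun p : Fin r × Fin r × Fin d => fun ω => F ω p.1 p.2.1 p.2.2) ℙ) :
    ∫ ω, ∑ u : ZMod n, ∑ v : ZMod n, cconv (F ω) x u v * cconv (F ω) y u v =
      ∑ u : ZMod n, ∑ v : ZMod n, ∑ k : Fin d, x u v k * y u v k :=
  stmt_6_general hr x y F hmeas hGauss hindep
end

section
/- Let $x \in \mathbb{R}^{n\times n\times d}$ and let $F \in \mathbb{R}^{r\times r\times d}$ ($r \leq n$) have i.i.d. zero-mean Gaussian entries with variance $\nu^2$. For a homogeneous activation $\sigma$ (i.e., $\sigma(cx) = c\sigma(x)$ for $c \geq 0$), $\mathbb{E}[\|\sigma(F*x)\|^2] = \nu^2 \nu_\sigma^2 r^2 \|x\|^2$, where $\nu_\sigma^2 = \mathbb{E}[\sigma(Z)^2]$ for a standard Gaussian $Z$. -/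
open MeasureTheory ProbabilityTheory

open scoped NNReal

/-! Each pixel `(F * x) u v` is a linear combination of the i.i.d. `N(0, ν²)` filter entries, so it
is itself centered Gaussian, of variance `ν²` times the sum of the squared coefficients. Positive
homogeneity turns `𝔼[σ(s Z)²]` into `s² 𝔼[σ(Z)²]` for `s ≥ 0`. Summed over the pixels, every entry
of `x` occurs once for each of the `r²` filter offsets, since shifts are bijections of `ZMod n`. -/

theorem aemeasurable_of_map_eq_gaussianReal {Ω : Type*} {mΩ : MeasurableSpace Ω} {P : Measure Ω}
    {X : Ω → ℝ} {m : ℝ} {v : ℝ≥0} (hX : P.map X = gaussianReal m v) : AEMeasurable X P :=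
  .of_map_ne_zero (by simp [hX, NeZero.ne])

section GaussianSum

variable {Ω ι : Type*} {mΩ : MeasurableSpace Ω} {P : Measure Ω} [IsProbabilityMeasure P]

theorem map_finsetSum_eq_gaussianReal_of_iIndepFun {X : ι → Ω → ℝ} (hindep : iIndepFun X P)
    {m : ι → ℝ} {v : ι → ℝ≥0} (hlaw : ∀ i, P.map (X i) = gaussianReal (m i) (v i))
    (s : Finset ι) :
    P.map (∑ i ∈ s, X i) = gaussianReal (∑ i ∈ s, m i) (∑ i ∈ s, v i) := by
  classical
  have hX i : AEMeasurable (X i) P := aemeasurable_of_map_eq_gaussianReal (hlaw i)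
  induction s using Finset.induction_on with
  | empty => simp [gaussianReal_zero_var, Pi.zero_def, Measure.map_const]
  | insert a s ha ih =>
    rw [Finset.sum_insert ha, Finset.sum_insert ha, Finset.sum_insert ha, add_comm (X a),
      add_comm (m a), add_comm (v a)]
    exact gaussianReal_add_gaussianReal_of_indepFun
      (hindep.indepFun_finsetSum_of_notMem₀ hX ha) ih (hlaw a)

theorem map_sum_mul_eq_gaussianReal_of_iIndepFun [Fintype ι] {X : ι → Ω → ℝ}
    (hindep : iIndepFun X P) {v : ℝ≥0} (hlaw : ∀ i, P.map (X i) = gaussianReal 0 v)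
    (c : ι → ℝ) :
    P.map (fun ω => ∑ i, c i * X i ω) = gaussianReal 0 ((∑ i, ‖c i‖₊ ^ 2) * v) := by
  have hX i : AEMeasurable (X i) P := aemeasurable_of_map_eq_gaussianReal (hlaw i)
  have hlaw' : ∀ i, P.map (fun ω => c i * X i ω) = gaussianReal 0 (‖c i‖₊ ^ 2 * v) := by
    intro i
    rw [show (fun ω => c i * X i ω) = (c i * ·) ∘ X i from rfl,
      ← AEMeasurable.map_map_of_aemeasurable (by fun_prop) (hX i), hlaw i,
      gaussianReal_map_const_mul, mul_zero]
    congr 2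
    ext
    simp
  have := map_finsetSum_eq_gaussianReal_of_iIndepFun
    (hindep.comp (fun i y => c i * y) fun i => measurable_const_mul (c i)) hlaw' Finset.univ
  simpa [Finset.sum_mul, Finset.sum_fn] using this

end GaussianSum

def PosHomogeneous (σ : ℝ → ℝ) : Prop :=
  ∀ c : ℝ, 0 ≤ c → ∀ t : ℝ, σ (c * t) = c * σ t

namespace PosHomogeneous

variable {σ : ℝ → ℝ}

theorem sq_le (hhom : PosHomogeneous σ) (y : ℝ) :
    σ y ^ 2 ≤ (σ 1 ^ 2 + σ (-1) ^ 2) * y ^ 2 := by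
  rcases le_total 0 y with hy | hy
  · have h := hhom y hy 1
    rw [mul_one] at h
    rw [h]
    nlinarith [sq_nonneg (σ (-1) * y)]
  · have h := hhom (-y) (by linarith) (-1)
    rw [mul_neg_one, neg_neg] at h
    rw [h]
    nlinarith [sq_nonneg (σ 1 * y)]

theorem integrable_sq_gaussianReal (hhom : PosHomogeneous σ) (hσ : Measurable σ) (v : ℝ≥0) :
    Integrable (fun y => σ y ^ 2) (gaussianReal 0 v) := by
  refine (((memLp_id_gaussianReal 2).integrable_sq).const_mul (σ 1 ^ 2 + σ (-1) ^ 2)).mono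
    (hσ.pow_const 2).aestronglyMeasurable (.of_forall fun y => ?_)
  simp only [Real.norm_eq_abs, abs_pow, sq_abs, id]
  exact (hhom.sq_le y).trans (le_abs_self _)

theorem integral_sq_gaussianReal (hhom : PosHomogeneous σ) (hσ : Measurable σ) (v : ℝ≥0) :
    ∫ y, σ y ^ 2 ∂gaussianReal 0 v = v * ∫ z, σ z ^ 2 ∂gaussianReal 0 1 := by
  have hv : gaussianReal 0 v = (gaussianReal 0 1).map (√(v : ℝ) * ·) := by
    rw [gaussianReal_map_const_mul, mul_zero, mul_one]
    congr
    ext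
    simp
  rw [hv, integral_map (by fun_prop) (hσ.pow_const 2).aestronglyMeasurable, ← integral_const_mul]
  congr 1 with z
  rw [hhom _ (Real.sqrt_nonneg _), mul_pow, Real.sq_sqrt v.coe_nonneg]

variable {Ω : Type*} {mΩ : MeasurableSpace Ω} {P : Measure Ω} {G : Ω → ℝ} {v : ℝ≥0}

theorem integrable_sq_comp (hhom : PosHomogeneous σ) (hσ : Measurable σ)
    (hG : P.map G = gaussianReal 0 v) :
    Integrable (fun ω => σ (G ω) ^ 2) P :=
  (integrable_map_measure (hσ.pow_const 2).aestronglyMeasurable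
    (aemeasurable_of_map_eq_gaussianReal hG)).1
    (hG ▸ hhom.integrable_sq_gaussianReal hσ v)

theorem integral_sq_comp (hhom : PosHomogeneous σ) (hσ : Measurable σ)
    (hG : P.map G = gaussianReal 0 v) :
    ∫ ω, σ (G ω) ^ 2 ∂P = v * ∫ z, σ z ^ 2 ∂gaussianReal 0 1 := by
  rw [← hhom.integral_sq_gaussianReal hσ, ← hG, integral_map
    (aemeasurable_of_map_eq_gaussianReal hG) (hσ.pow_const 2).aestronglyMeasurable]

end PosHomogeneous

section CyclicConvolution

variable {n r d : ℕ}

def cconvCoeff (x : ZMod n → ZMod n → Fin d → ℝ) (u v : ZMod n) (p : Fin r × Fin r × Fin d) : ℝ :=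
  x (u - ((p.1 : ℕ) : ZMod n)) (v - ((p.2.1 : ℕ) : ZMod n)) p.2.2

variable [NeZero n]

theorem cconv_eq_sum_cconvCoeff_mul (F : Fin r → Fin r → Fin d → ℝ)
    (x : ZMod n → ZMod n → Fin d → ℝ) (u v : ZMod n) :
    cconv F x u v = ∑ p, cconvCoeff x u v p * F p.1 p.2.1 p.2.2 := by
  simp only [cconv, cconvCoeff, Fintype.sum_prod_type, mul_comm]

theorem sum_sum_comp_sub_sub {G M : Type*} [AddGroup G] [Fintype G] [AddCommMonoid M]
    (f : G → G → M) (a b : G) : ∑ u, ∑ v, f (u - a) (v - b) = ∑ u, ∑ v, f u v :=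
  ((Equiv.subRight a).sum_comp fun u => ∑ v, f u (v - b)).trans
    (Fintype.sum_congr _ _ fun u => (Equiv.subRight b).sum_comp (f u))

theorem sum_sum_sum_cconvCoeff_sq (x : ZMod n → ZMod n → Fin d → ℝ) :
    ∑ u, ∑ v, ∑ p : Fin r × Fin r × Fin d, cconvCoeff x u v p ^ 2 =
      r ^ 2 * ∑ u, ∑ v, ∑ k, x u v k ^ 2 := by
  calc ∑ u, ∑ v, ∑ p : Fin r × Fin r × Fin d, cconvCoeff x u v p ^ 2
      = ∑ p : Fin r × Fin r × Fin d, ∑ u, ∑ v, cconvCoeff x u v p ^ 2 := by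
        simp_rw [Finset.sum_comm (s := Finset.univ (α := ZMod n))
          (t := Finset.univ (α := Fin r × Fin r × Fin d))]
    _ = ∑ p : Fin r × Fin r × Fin d, ∑ u, ∑ v, x u v p.2.2 ^ 2 :=
        Fintype.sum_congr _ _ fun p => sum_sum_comp_sub_sub (fun u v => x u v p.2.2 ^ 2) _ _
    _ = r ^ 2 * ∑ u, ∑ v, ∑ k, x u v k ^ 2 := by
        simp only [Fintype.sum_prod_type, Finset.sum_const, Finset.card_univ, Fintype.card_fin,
          nsmul_eq_mul]
        rw [Finset.sum_comm (t := Finset.univ (α := ZMod n)), ← mul_assoc, ← sq]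
        exact congrArg _ (Fintype.sum_congr _ _ fun _ => Finset.sum_comm)

end CyclicConvolution

theorem stmt_7_general {Ω : Type*} [MeasureSpace Ω] [IsProbabilityMeasure (ℙ : Measure Ω)]
    {n r d : ℕ} [NeZero n]
    (σ : ℝ → ℝ) (hσmeas : Measurable σ)
    (hhom : ∀ c : ℝ, 0 ≤ c → ∀ t : ℝ, σ (c * t) = c * σ t)
    (ν : ℝ)
    (x : ZMod n → ZMod n → Fin d → ℝ)
    (F : Ω → Fin r → Fin r → Fin d → ℝ)
    (hGauss : ∀ i j k, Measure.map (fun ω => F ω i j k) ℙ =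
      gaussianReal 0 (ν ^ 2).toNNReal)
    (hindep : iIndepFun
      (fun p : Fin r × Fin r × Fin d => fun ω => F ω p.1 p.2.1 p.2.2) ℙ) :
    ∫ ω, ∑ u : ZMod n, ∑ v : ZMod n, (σ (cconv (F ω) x u v)) ^ 2 =
      ν ^ 2 * (∫ z, (σ z) ^ 2 ∂gaussianReal 0 1) * r ^ 2 *
        ∑ u : ZMod n, ∑ v : ZMod n, ∑ k : Fin d, (x u v k) ^ 2 := by
  have hpixel : ∀ u v, (ℙ : Measure Ω).map (fun ω => cconv (F ω) x u v) = gaussianReal 0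
      ((∑ p : Fin r × Fin r × Fin d, ‖cconvCoeff x u v p‖₊ ^ 2) * (ν ^ 2).toNNReal) := by
    intro u v
    simp only [cconv_eq_sum_cconvCoeff_mul]
    exact map_sum_mul_eq_gaussianReal_of_iIndepFun hindep (fun p => hGauss _ _ _) _
  have hint u v := PosHomogeneous.integrable_sq_comp hhom hσmeas (hpixel u v)
  calc ∫ ω, ∑ u, ∑ v, σ (cconv (F ω) x u v) ^ 2
      = ∑ u, ∑ v, ∫ ω, σ (cconv (F ω) x u v) ^ 2 := by
        rw [integral_finsetSum _ fun u _ => integrable_finsetSum _ fun v _ => hint u v]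
        exact Fintype.sum_congr _ _ fun u => integral_finsetSum _ fun v _ => hint u v
    _ = ∑ u, ∑ v, (∑ p : Fin r × Fin r × Fin d, cconvCoeff x u v p ^ 2) * ν ^ 2 *
          ∫ z, σ z ^ 2 ∂gaussianReal 0 1 := by
        simp [PosHomogeneous.integral_sq_comp hhom hσmeas (hpixel _ _),
          Real.coe_toNNReal _ (sq_nonneg ν)]
    _ = _ := by
        simp_rw [← Finset.sum_mul]
        rw [sum_sum_sum_cconvCoeff_sq]
        ring

/-- For a measurable homogeneous activation `σ` and a filter `F` with i.i.d.
centered Gaussian entries of variance `ν²`,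
`𝔼[‖σ(F * x)‖²] = ν² ν_σ² r² ‖x‖²`, where `ν_σ² = 𝔼[σ(Z)²]`, `Z ∼ N(0,1)`. -/
theorem stmt_7 {Ω : Type*} [MeasureSpace Ω] [IsProbabilityMeasure (ℙ : Measure Ω)]
    {n r d : ℕ} [NeZero n] (hr : 0 < r) (hrn : r ≤ n)
    (σ : ℝ → ℝ) (hσmeas : Measurable σ)
    (hhom : ∀ c : ℝ, 0 ≤ c → ∀ t : ℝ, σ (c * t) = c * σ t)
    (ν : ℝ) (hν : 0 ≤ ν)
    (x : ZMod n → ZMod n → Fin d → ℝ)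
    (F : Ω → Fin r → Fin r → Fin d → ℝ)
    (hmeas : ∀ i j k, Measurable fun ω => F ω i j k)
    (hGauss : ∀ i j k, Measure.map (fun ω => F ω i j k) ℙ =
      gaussianReal 0 (ν ^ 2).toNNReal)
    (hindep : iIndepFun
      (fun p : Fin r × Fin r × Fin d => fun ω => F ω p.1 p.2.1 p.2.2) ℙ) :
    ∫ ω, ∑ u : ZMod n, ∑ v : ZMod n, (σ (cconv (F ω) x u v)) ^ 2 =
      ν ^ 2 * (∫ z, (σ z) ^ 2 ∂gaussianReal 0 1) * r ^ 2 *
        ∑ u : ZMod n, ∑ v : ZMod n, ∑ k : Fin d, (x u v k) ^ 2 :=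
  stmt_7_general σ hσmeas hhom ν x F hGauss hindep
end

section
/- Let $\rho \in [0,1]$ and define the unit vectors $x = (\sqrt{(1+\rho)/2}, \sqrt{(1-\rho)/2})$ and $y = (\sqrt{(1+\rho)/2}, -\sqrt{(1-\rho)/2})$ in $\mathbb{R}^2$. Then $\langle x, y \rangle = \rho$ and, with $F \sim \mathcal{N}(0, 2)$ scalar, $\mathbb{E}[\mathrm{ReLU}(Fx_1)\mathrm{ReLU}(Fy_1) + \mathrm{ReLU}(Fx_2)\mathrm{ReLU}(Fy_2)] = \frac{1+\rho}{2}$. -/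
open MeasureTheory ProbabilityTheory

lemma gauss_pos_part_sq : ∫ x, (max x 0)^2 ∂(gaussianReal 0 2) = 1 := by
  rw [gaussianReal_of_var_ne_zero 0 (by norm_num : (2:NNReal) ≠ 0)]
  have hpdf : gaussianPDF 0 2 = fun x => ((Real.toNNReal (gaussianPDFReal 0 2 x) : NNReal) : ENNReal) := by
    ext x; simp [gaussianPDF, ENNReal.ofReal]
  rw [hpdf, integral_withDensity_eq_integral_smul
    ((measurable_gaussianPDFReal 0 2).real_toNNReal) (fun x => (max x 0)^2)]
  have heq : (fun x => Real.toNNReal (gaussianPDFReal 0 2 x) • (max x 0)^2)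
      = Set.indicator (Set.Ioi (0:ℝ)) (fun x => (2 * Real.sqrt Real.pi)⁻¹ * (x ^ (2:ℝ) * Real.exp (-(1/4) * x ^ (2:ℝ)))) := by
    funext x
    rw [NNReal.smul_def, Real.coe_toNNReal _ (gaussianPDFReal_nonneg 0 2 x)]
    rcases le_or_gt x 0 with hx | hx
    · rw [Set.indicator_of_notMem (by simpa using hx), max_eq_right hx]
      simp
    · rw [Set.indicator_of_mem (Set.mem_Ioi.mpr hx)]
      rw [max_eq_left hx.le]
      have h4 : Real.sqrt (2 * Real.pi * ((2:NNReal):ℝ)) = 2 * Real.sqrt Real.pi := by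
        push_cast
        rw [show (2:ℝ) * Real.pi * 2 = 4 * Real.pi by ring,
          Real.sqrt_mul (by norm_num) Real.pi,
          show (4:ℝ) = 2^2 by norm_num, Real.sqrt_sq (by norm_num)]
      rw [gaussianPDFReal, h4]
      push_cast
      rw [Real.rpow_two]
      simp only [smul_eq_mul]; ring_nf
  rw [heq, integral_indicator measurableSet_Ioi, integral_const_mul,
    integral_rpow_mul_exp_neg_mul_rpow (by norm_num) (by norm_num) (by norm_num)]
  have hG : Real.Gamma (((2:ℝ) + 1) / 2) = Real.sqrt Real.pi / 2 := by
    rw [show ((2:ℝ)+1)/2 = 1/2 + 1 by norm_num, Real.Gamma_add_one (by norm_num),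
      Real.Gamma_one_half_eq]
    ring
  have h8 : ((1:ℝ)/4) ^ (-((2:ℝ) + 1) / 2) = 8 := by
    rw [show (-((2:ℝ)+1)/2) = ((1/2) * (-3) : ℝ) by norm_num, Real.rpow_mul (by norm_num),
      show ((1:ℝ)/4) ^ ((1:ℝ)/2) = 1/2 by
        rw [← Real.sqrt_eq_rpow]
        rw [show (1:ℝ)/4 = (1/2)^2 by norm_num, Real.sqrt_sq (by norm_num)],
      show (-3 : ℝ) = ((-3 : ℤ) : ℝ) by norm_num, Real.rpow_intCast]
    norm_num
  rw [hG, h8]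
  have : Real.sqrt Real.pi ≠ 0 := by positivity
  field_simp
  ring

/-- Tightness of the upper bound `(1+ρ)/2`: for `ρ ∈ [0,1]` and unit vectors
`x = (√((1+ρ)/2), √((1-ρ)/2))`, `y = (√((1+ρ)/2), -√((1-ρ)/2))` in `ℝ²`,
`⟨x, y⟩ = ρ`, and for a scalar Gaussian `F ∼ N(0, 2)`,
`𝔼[ReLU(F x₁) ReLU(F y₁) + ReLU(F x₂) ReLU(F y₂)] = (1+ρ)/2`. -/
theorem stmt_10 {Ω : Type*} [MeasureSpace Ω] [IsProbabilityMeasure (ℙ : Measure Ω)]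
    (ρ : ℝ) (hρ : ρ ∈ Set.Icc (0 : ℝ) 1)
    (F : Ω → ℝ) (hF : Measure.map F ℙ = gaussianReal 0 2)
    (x₁ x₂ y₁ y₂ : ℝ)
    (hx₁ : x₁ = Real.sqrt ((1 + ρ) / 2)) (hx₂ : x₂ = Real.sqrt ((1 - ρ) / 2))
    (hy₁ : y₁ = Real.sqrt ((1 + ρ) / 2)) (hy₂ : y₂ = -Real.sqrt ((1 - ρ) / 2)) :
    x₁ * y₁ + x₂ * y₂ = ρ ∧
      ∫ ω, (max (F ω * x₁) 0 * max (F ω * y₁) 0 +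
            max (F ω * x₂) 0 * max (F ω * y₂) 0) = (1 + ρ) / 2 := by
  obtain ⟨hρ0, hρ1⟩ := hρ
  have ha : (0:ℝ) ≤ (1 + ρ) / 2 := by linarith
  have hb : (0:ℝ) ≤ (1 - ρ) / 2 := by linarith
  have hx₁0 : 0 ≤ x₁ := hx₁ ▸ Real.sqrt_nonneg _
  have h11 : x₁ * y₁ = (1 + ρ) / 2 := by
    rw [hx₁, hy₁, Real.mul_self_sqrt ha]
  have h22 : x₂ * y₂ = -((1 - ρ) / 2) := by
    rw [hx₂, hy₂, mul_neg, Real.mul_self_sqrt hb]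
  refine ⟨by rw [h11, h22]; ring, ?_⟩
  -- the second ReLU product vanishes pointwise; the first is x₁² (max F 0)²
  have hFae : AEMeasurable F ℙ := by
    by_contra h
    rw [Measure.map_of_not_aemeasurable h] at hF
    have h1 : (0 : Measure ℝ) Set.univ = gaussianReal 0 2 Set.univ := by rw [hF]
    simp [measure_univ] at h1
  have hpt : ∀ ω, (max (F ω * x₁) 0 * max (F ω * y₁) 0 +
      max (F ω * x₂) 0 * max (F ω * y₂) 0) = x₁^2 * (max (F ω) 0)^2 := by
    intro ω
    have h2 : max (F ω * x₂) 0 * max (F ω * y₂) 0 = 0 := by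
      have hx₂0 : 0 ≤ x₂ := hx₂ ▸ Real.sqrt_nonneg _
      have hy2 : y₂ = -x₂ := by rw [hy₂, hx₂]
      rw [hy2, mul_neg]
      rcases le_total (F ω * x₂) 0 with h | h
      · rw [max_eq_right h, zero_mul]
      · rw [max_eq_right (neg_nonpos.mpr h), mul_zero]
    have h1 : max (F ω * x₁) 0 = x₁ * max (F ω) 0 := by
      rw [mul_comm (F ω) x₁, mul_max_of_nonneg _ _ hx₁0, mul_zero]
    rw [h2, hy₁.trans hx₁.symm, h1]
    ring
  calc ∫ ω, (max (F ω * x₁) 0 * max (F ω * y₁) 0 +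
            max (F ω * x₂) 0 * max (F ω * y₂) 0)
      = ∫ ω, x₁^2 * (max (F ω) 0)^2 := by exact integral_congr_ae (Filter.Eventually.of_forall hpt)
    _ = x₁^2 * ∫ ω, (max (F ω) 0)^2 := integral_const_mul _ _
    _ = x₁^2 * ∫ x, (max x 0)^2 ∂(Measure.map F ℙ) := by
        rw [integral_map hFae]
        exact (Continuous.aestronglyMeasurable (by continuity))
    _ = (1 + ρ) / 2 := by
        rw [hF, gauss_pos_part_sq, mul_one, hx₁, Real.sq_sqrt ha]
end

section
/- Let $A$ and $B$ be axis-aligned rectangles in $\mathbb{Z}_n\times\mathbb{Z}_n$ whose intersection is a rectangle of size $e \times f$ with $e, f \geq 2r$ (and all rectangles far from wrap-around). Then the shared $r$-boundary satisfies $|\partial_r(A, B)| = 4r(e + f)$. -/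
/-- The shared `r`-boundary of two sets of pixels `A, B ⊆ ℤ × ℤ` (the plane
models pictures far from wrap-around): all pixels whose centered
`(2r+1) × (2r+1)` square intersects both `A` and `B`, and is not contained in
`A` or not contained in `B`. -/
def boundaryZ (r : ℕ) (A B : Set (ℤ × ℤ)) : Set (ℤ × ℤ) :=
  {p | ((∃ a ∈ Set.Icc (-(r : ℤ)) r, ∃ b ∈ Set.Icc (-(r : ℤ)) r,
          (p.1 + a, p.2 + b) ∈ A) ∧
        ∃ c ∈ Set.Icc (-(r : ℤ)) r, ∃ d ∈ Set.Icc (-(r : ℤ)) r,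
          (p.1 + c, p.2 + d) ∈ B) ∧
      ((∃ a ∈ Set.Icc (-(r : ℤ)) r, ∃ b ∈ Set.Icc (-(r : ℤ)) r,
          (p.1 + a, p.2 + b) ∉ A) ∨
        ∃ c ∈ Set.Icc (-(r : ℤ)) r, ∃ d ∈ Set.Icc (-(r : ℤ)) r,
          (p.1 + c, p.2 + d) ∉ B)}

/-!
Since `A` and `B` are products of intervals, the window of radius `r` around `p` meets both
of them iff `p` lies in their intersection `I = [α, β] × [γ, δ]` thickened by `r`, and it
fails to lie in `A ∩ B` iff `p` lies outside `I` shrunk by `r`. The shared boundary is therefore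
a frame, with `(e + 2r)(f + 2r) - (e - 2r)(f - 2r) = 4r(e + f)` pixels. For `r = 0` the window
is a single pixel and the boundary is empty.
-/

open Set

theorem boundaryZ_zero (A B : Set (ℤ × ℤ)) : boundaryZ 0 A B = ∅ := by
  ext p
  simp only [boundaryZ, Nat.cast_zero, neg_zero, Icc_self, mem_singleton_iff, exists_eq_left,
    add_zero, Prod.mk.eta, mem_ofPred_eq, mem_empty_iff_false, iff_false]
  tauto

section Window

variable (r : ℕ)

theorem exists_add_mem_Icc_iff {lo hi : ℤ} (x : ℤ) :
    (∃ a ∈ Icc (-(r : ℤ)) r, x + a ∈ Icc lo hi) ↔ lo ≤ hi ∧ lo - r ≤ x ∧ x ≤ hi + r := by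
  simp only [mem_Icc]
  constructor
  · rintro ⟨a, ha, hxa⟩
    omega
  · intro h
    exact ⟨max (lo - x) (min 0 (hi - x)), by omega, by omega⟩

theorem exists_add_notMem_Icc_iff {lo hi : ℤ} (x : ℤ) :
    (∃ a ∈ Icc (-(r : ℤ)) r, x + a ∉ Icc lo hi) ↔ ¬(lo + r ≤ x ∧ x ≤ hi - r) := by
  simp only [mem_Icc]
  constructor
  · rintro ⟨a, ha, hxa⟩
    omega
  · intro h
    by_cases hlo : lo + r ≤ x
    · exact ⟨r, by omega, by omega⟩
    · exact ⟨-r, by omega, by omega⟩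

theorem exists_add_mem_prod_iff {I J : Set ℤ} (x y : ℤ) :
    (∃ a ∈ Icc (-(r : ℤ)) r, ∃ b ∈ Icc (-(r : ℤ)) r, (x + a, y + b) ∈ I ×ˢ J) ↔
      (∃ a ∈ Icc (-(r : ℤ)) r, x + a ∈ I) ∧ ∃ b ∈ Icc (-(r : ℤ)) r, y + b ∈ J := by
  simp only [mem_prod]
  aesop

theorem exists_add_notMem_prod_iff {I J : Set ℤ} (x y : ℤ) :
    (∃ a ∈ Icc (-(r : ℤ)) r, ∃ b ∈ Icc (-(r : ℤ)) r, (x + a, y + b) ∉ I ×ˢ J) ↔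
      (∃ a ∈ Icc (-(r : ℤ)) r, x + a ∉ I) ∨ ∃ b ∈ Icc (-(r : ℤ)) r, y + b ∉ J := by
  have h0 : (0 : ℤ) ∈ Icc (-(r : ℤ)) r := by simp
  simp only [mem_prod, not_and_or]
  constructor
  · rintro ⟨a, ha, b, hb, h | h⟩
    exacts [Or.inl ⟨a, ha, h⟩, Or.inr ⟨b, hb, h⟩]
  · rintro (⟨a, ha, h⟩ | ⟨b, hb, h⟩)
    exacts [⟨a, ha, 0, h0, Or.inl h⟩, ⟨0, h0, b, hb, Or.inr h⟩]

end Window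

theorem boundaryZ_Icc_prod_Icc (r : ℕ) {a₁ a₂ b₁ b₂ c₁ c₂ d₁ d₂ : ℤ}
    (hx : max a₁ c₁ ≤ min a₂ c₂) (hy : max b₁ d₁ ≤ min b₂ d₂) :
    boundaryZ r (Icc a₁ a₂ ×ˢ Icc b₁ b₂) (Icc c₁ c₂ ×ˢ Icc d₁ d₂) =
      (Icc (max a₁ c₁ - r) (min a₂ c₂ + r) ×ˢ Icc (max b₁ d₁ - r) (min b₂ d₂ + r)) \
        (Icc (max a₁ c₁ + r) (min a₂ c₂ - r) ×ˢ Icc (max b₁ d₁ + r) (min b₂ d₂ - r)) := by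
  ext ⟨x, y⟩
  simp only [boundaryZ, mem_ofPred_eq]
  rw [exists_add_mem_prod_iff, exists_add_mem_prod_iff, exists_add_notMem_prod_iff,
    exists_add_notMem_prod_iff]
  simp only [exists_add_mem_Icc_iff, exists_add_notMem_Icc_iff]
  simp only [mem_sdiff, mem_prod, mem_Icc]
  omega

theorem ncard_Icc_prod_Icc (a b c d : ℤ) :
    ((Icc a b ×ˢ Icc c d).ncard : ℤ) = (b + 1 - a).toNat * (d + 1 - c).toNat := by
  rw [ncard_prod, ← Finset.coe_Icc, ← Finset.coe_Icc, ncard_coe_finset, ncard_coe_finset,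
    Int.card_Icc, Int.card_Icc]
  push_cast
  rfl

theorem ncard_frame (r : ℕ) {α β γ δ : ℤ} (he : 2 * (r : ℤ) ≤ β - α + 1)
    (hf : 2 * (r : ℤ) ≤ δ - γ + 1) :
    (((Icc (α - r) (β + r) ×ˢ Icc (γ - r) (δ + r)) \
        (Icc (α + r) (β - r) ×ˢ Icc (γ + r) (δ - r))).ncard : ℤ) =
      4 * r * ((β - α + 1) + (δ - γ + 1)) := by
  have hsub : Icc (α + r) (β - r) ×ˢ Icc (γ + r) (δ - r) ⊆
      Icc (α - r) (β + r) ×ˢ Icc (γ - r) (δ + r) :=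
    prod_mono (Icc_subset_Icc (by omega) (by omega)) (Icc_subset_Icc (by omega) (by omega))
  rw [ncard_sdiff hsub, Nat.cast_sub (ncard_le_ncard hsub), ncard_Icc_prod_Icc,
    ncard_Icc_prod_Icc]
  have h₁ : ((β + r + 1 - (α - r)).toNat : ℤ) = β - α + 1 + 2 * r := by omega
  have h₂ : ((δ + r + 1 - (γ - r)).toNat : ℤ) = δ - γ + 1 + 2 * r := by omega
  have h₃ : ((β - r + 1 - (α + r)).toNat : ℤ) = β - α + 1 - 2 * r := by omega
  have h₄ : ((δ - r + 1 - (γ + r)).toNat : ℤ) = δ - γ + 1 - 2 * r := by omega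
  rw [h₁, h₂, h₃, h₄]
  ring

/-- For axis-aligned rectangles `A` and `B` whose intersection is a rectangle
of size `e × f` with `e, f ≥ 2r`, the shared `r`-boundary has exactly
`4r(e + f)` pixels. -/
theorem stmt_15 (r : ℕ) (a₁ a₂ b₁ b₂ c₁ c₂ d₁ d₂ e f : ℤ)
    (A B : Set (ℤ × ℤ))
    (hA : A = Set.Icc a₁ a₂ ×ˢ Set.Icc b₁ b₂)
    (hB : B = Set.Icc c₁ c₂ ×ˢ Set.Icc d₁ d₂)
    (he : min a₂ c₂ - max a₁ c₁ + 1 = e)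
    (hf : min b₂ d₂ - max b₁ d₁ + 1 = f)
    (hre : 2 * (r : ℤ) ≤ e) (hrf : 2 * (r : ℤ) ≤ f) :
    ((boundaryZ r A B).ncard : ℤ) = 4 * r * (e + f) := by
  obtain rfl | hr := Nat.eq_zero_or_pos r
  · simp [boundaryZ_zero]
  subst hA hB he hf
  rw [boundaryZ_Icc_prod_Icc r (by omega) (by omega), ncard_frame r hre hrf]
end
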